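/- arXiv:2410.22699 — 6 statements merged into one kernel-verified Lean document; each statement's English description precedes it below -/
import Mathlib

section
/- Let P, Q be probability measures on a measurable space X, both absolutely continuous w.r.t. a σ-finite measure μ with densities p, q. Suppose there exist 0 ≤ r₁ < 1 < r₂ such that q(x) > 0 and r₁ ≤ p(x)/q(x) ≤ r₂ for μ-a.e. x. Then for any convex f:(0,∞)→ℝ with f(1)=0, the f-divergence satisfies D_f(P‖Q) ≤ ((1−r₁)/(r₂−r₁))·f(r₂) + ((r₂−1)/(r₂−r₁))·f(r₁), where f(r₁) for r₁=0 is interpreted as lim_{x→0+} f(x) and the bound is trivially true if this limit is +∞. -/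
/-! Each ratio `t = p x / q x` lies in `[r₁, r₂]`, so by convexity `f t` lies below the chord of `f`
over `[r₁, r₂]`. Multiplied by `q x`, the chord becomes linear in `(p x, q x)`, and its integral is
computed from `∫ p = ∫ q = 1`. -/

open MeasureTheory Set

theorem ConvexOn.sub_mul_le_of_mem_Icc {s : Set ℝ} {f : ℝ → ℝ} (hf : ConvexOn ℝ s f)
    {a b t : ℝ} (ha : a ∈ s) (hb : b ∈ s) (ht : t ∈ Icc a b) :
    (b - a) * f t ≤ (b - t) * f a + (t - a) * f b := by
  rcases ht.1.eq_or_lt with rfl | hat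
  · linarith
  rcases ht.2.eq_or_lt with rfl | htb
  · linarith
  exact hf.secant_mono_aux1 ha hb hat htb

theorem ConvexOn.sub_mul_mul_le_of_div_mem_Icc {s : Set ℝ} {f : ℝ → ℝ} (hf : ConvexOn ℝ s f)
    {a b p q : ℝ} (ha : a ∈ s) (hb : b ∈ s) (hq : 0 < q) (hpq : p / q ∈ Icc a b) :
    (b - a) * (q * f (p / q)) ≤ (b * q - p) * f a + (p - a * q) * f b := by
  have h := mul_le_mul_of_nonneg_left (hf.sub_mul_le_of_mem_Icc ha hb hpq) hq.le
  have hp : q * (p / q) = p := mul_div_cancel₀ p hq.ne'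
  linear_combination h + (f b - f a) * hp

section LinearCombination

variable {X : Type*} [MeasurableSpace X] {μ : Measure X} {p q : X → ℝ}

theorem integrable_sub_mul_add_sub_mul (hp : Integrable p μ) (hq : Integrable q μ)
    (a b c d : ℝ) : Integrable (fun x => (b * q x - p x) * c + (p x - a * q x) * d) μ :=
  (((hq.const_mul b).sub hp).mul_const c).add ((hp.sub (hq.const_mul a)).mul_const d)

theorem integral_sub_mul_add_sub_mul (hp : Integrable p μ) (hq : Integrable q μ) (a b c d : ℝ) :
    ∫ x, ((b * q x - p x) * c + (p x - a * q x) * d) ∂μ =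
      (b * ∫ x, q x ∂μ - ∫ x, p x ∂μ) * c + (∫ x, p x ∂μ - a * ∫ x, q x ∂μ) * d := by
  have hbq : Integrable (fun x => b * q x) μ := hq.const_mul b
  have haq : Integrable (fun x => a * q x) μ := hq.const_mul a
  rw [integral_add (f := fun x => (b * q x - p x) * c) (g := fun x => (p x - a * q x) * d)
      (hbq.sub hp |>.mul_const c) (hp.sub haq |>.mul_const d), integral_mul_const,
    integral_mul_const, integral_sub hbq hp, integral_sub hp haq, integral_const_mul,
    integral_const_mul]

end LinearCombination

theorem fDiv_upper_bound_of_density_ratio_bounded_general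
    {X : Type*} [MeasurableSpace X] (μ : Measure X)
    (p q : X → ℝ)
    (hpint : Integrable p μ) (hqint : Integrable q μ)
    (hpi : ∫ x, p x ∂μ = 1) (hqi : ∫ x, q x ∂μ = 1)
    (r₁ r₂ : ℝ) (hr₁0 : 0 ≤ r₁) (hr₁ : r₁ < 1) (hr₂ : 1 < r₂)
    (hae : ∀ᵐ x ∂μ, 0 < q x ∧ r₁ ≤ p x / q x ∧ p x / q x ≤ r₂)
    (f : ℝ → ℝ) (hf : ConvexOn ℝ (Set.Ici 0) f) (hf1 : f 1 = 0) :
    ∫ x, q x * f (p x / q x) ∂μ ≤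
      (1 - r₁) / (r₂ - r₁) * f r₂ + (r₂ - 1) / (r₂ - r₁) * f r₁ := by
  have hr : 0 < r₂ - r₁ := by linarith
  have hr₂0 : r₂ ∈ Ici (0 : ℝ) := le_trans zero_le_one hr₂.le
  have hbound : ∀ᵐ x ∂μ, q x * f (p x / q x) ≤
      ((r₂ * q x - p x) * f r₁ + (p x - r₁ * q x) * f r₂) / (r₂ - r₁) := by
    filter_upwards [hae] with x ⟨hqx, hlo, hhi⟩
    rw [le_div_iff₀ hr, mul_comm]
    exact hf.sub_mul_mul_le_of_div_mem_Icc hr₁0 hr₂0 hqx ⟨hlo, hhi⟩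
  rw [show (1 - r₁) / (r₂ - r₁) * f r₂ + (r₂ - 1) / (r₂ - r₁) * f r₁ =
      ((r₂ - 1) * f r₁ + (1 - r₁) * f r₂) / (r₂ - r₁) by ring]
  by_cases hint : Integrable (fun x => q x * f (p x / q x)) μ
  · calc ∫ x, q x * f (p x / q x) ∂μ
        ≤ ∫ x, ((r₂ * q x - p x) * f r₁ + (p x - r₁ * q x) * f r₂) / (r₂ - r₁) ∂μ :=
          integral_mono_ae hint
            ((integrable_sub_mul_add_sub_mul hpint hqint r₁ r₂ _ _).div_const _) hbound
      _ = ((r₂ - 1) * f r₁ + (1 - r₁) * f r₂) / (r₂ - r₁) := by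
          rw [integral_div, integral_sub_mul_add_sub_mul hpint hqint, hpi, hqi]
          ring
  -- the Bochner integral of a non-integrable function is `0`, and the bound is `≥ f 1 = 0`
  · have hchord := hf.sub_mul_le_of_mem_Icc hr₁0 hr₂0 ⟨hr₁.le, hr₂.le⟩
    rw [hf1, mul_zero] at hchord
    rw [integral_undef hint]
    exact div_nonneg hchord hr.le

theorem fDiv_upper_bound_of_density_ratio_bounded
    {X : Type*} [MeasurableSpace X] (μ : Measure X) [SigmaFinite μ]
    (p q : X → ℝ) (hp : Measurable p) (hq : Measurable q)
    (hp0 : ∀ x, 0 ≤ p x)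
    (hpint : Integrable p μ) (hqint : Integrable q μ)
    (hpi : ∫ x, p x ∂μ = 1) (hqi : ∫ x, q x ∂μ = 1)
    (r₁ r₂ : ℝ) (hr₁0 : 0 ≤ r₁) (hr₁ : r₁ < 1) (hr₂ : 1 < r₂)
    (hae : ∀ᵐ x ∂μ, 0 < q x ∧ r₁ ≤ p x / q x ∧ p x / q x ≤ r₂)
    (f : ℝ → ℝ) (hf : ConvexOn ℝ (Set.Ici 0) f) (hf1 : f 1 = 0)
    (hf0 : Filter.Tendsto f (nhdsWithin 0 (Set.Ioi 0)) (nhds (f 0))) :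
    ∫ x, q x * f (p x / q x) ∂μ ≤
      (1 - r₁) / (r₂ - r₁) * f r₂ + (r₂ - 1) / (r₂ - r₁) * f r₁ :=
  fDiv_upper_bound_of_density_ratio_bounded_general μ p q hpint hqint hpi hqi r₁ r₂ hr₁0 hr₁ hr₂ hae
    f hf hf1
end

section
/- Let X be a measurable space, t > u positive integers, and A₁,…,A_t measurable subsets of X such that every x ∈ X belongs to at most u of the sets A_i. Let Q₁,…,Q_t be probability measures on X satisfying Q_i(A) ≤ e^ε Q_j(A) for all i,j ∈ [t] and all measurable A. Then min_{i∈[t]} Q_i(A_i) ≤ (u/t)e^ε / ((u/t)e^ε + 1 − u/t). -/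
open MeasureTheory
open scoped Classical

theorem packing_min_prob_bound {X : Type*} [MeasurableSpace X]
    (t u : ℕ) (hu : 0 < u) (htu : u < t)
    (A : Fin t → Set X) (hAm : ∀ i, MeasurableSet (A i))
    (hcard : ∀ x : X, (Finset.univ.filter fun i => x ∈ A i).card ≤ u)
    (ε : ℝ) (hε : 0 < ε)
    (Q : Fin t → Measure X) (hQ : ∀ i, IsProbabilityMeasure (Q i))
    (hldp : ∀ i j, ∀ B : Set X, MeasurableSet B →
      Q i B ≤ ENNReal.ofReal (Real.exp ε) * Q j B) :
    ∃ i, (Q i (A i)).toReal ≤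
      ((u : ℝ) / t * Real.exp ε) / ((u : ℝ) / t * Real.exp ε + 1 - (u : ℝ) / t) := by
  have ht0 : 0 < t := lt_trans hu htu
  have htR : (0:ℝ) < t := by exact_mod_cast ht0
  set E := Real.exp ε with hEdef
  have hE0 : 0 < E := Real.exp_pos ε
  have hE1 : 1 ≤ E := Real.one_le_exp hε.le
  have huR : (0:ℝ) < u := by exact_mod_cast hu
  set c : ℝ := ((u:ℝ)*E)/((u:ℝ)*E + t - u) with hcdef
  have hD : 0 < (u:ℝ)*E + t - u := by nlinarith [mul_nonneg huR.le (sub_nonneg.mpr hE1)]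
  have hc0 : 0 ≤ c := div_nonneg (by positivity) hD.le
  -- final algebraic identity
  have hgoal : ((u : ℝ) / t * E) / ((u : ℝ) / t * E + 1 - (u : ℝ) / t) = c := by
    have hD2 : (0:ℝ) < (u:ℝ)/t*E + 1 - (u:ℝ)/t := by
      nlinarith [mul_nonneg (div_nonneg huR.le htR.le) (sub_nonneg.mpr hE1)]
    rw [hcdef, div_eq_div_iff hD2.ne' hD.ne']
    field_simp
  -- pattern sets
  set pat : X → Finset (Fin t) := fun x => Finset.univ.filter fun i => x ∈ A i with hpatdef
  set B : Finset (Fin t) → Set X := fun S => pat ⁻¹' {S} with hBdef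
  have hmem : ∀ (S : Finset (Fin t)) (x : X), x ∈ B S ↔ ∀ i, x ∈ A i ↔ i ∈ S := by
    intro S x
    simp only [hBdef, hpatdef, Set.mem_preimage, Set.mem_singleton_iff, Finset.ext_iff,
      Finset.mem_filter, Finset.mem_univ, true_and]
  have hBm : ∀ S, MeasurableSet (B S) := by
    intro S
    have hrw : B S = ⋂ i, (if i ∈ S then A i else (A i)ᶜ) := by
      ext x
      simp only [Set.mem_iInter, hmem]
      constructor
      · intro h i
        by_cases hi : i ∈ S
        · simpa [hi] using (h i).mpr hi
        · simp only [hi, if_false, Set.mem_compl_iff]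
          intro hx; exact hi ((h i).mp hx)
      · intro h i
        specialize h i
        by_cases hi : i ∈ S
        · simp only [hi, if_true] at h; simp [hi, h]
        · simp only [hi, if_false, Set.mem_compl_iff] at h; simp [hi, h]
    rw [hrw]
    exact MeasurableSet.iInter fun i => by
      by_cases hi : i ∈ S
      · simpa [hi] using hAm i
      · simpa [hi] using (hAm i).compl
  have hBempty : ∀ S : Finset (Fin t), u < S.card → B S = ∅ := by
    intro S hS
    ext x
    simp only [Set.mem_empty_iff_false, iff_false]
    intro hx
    have hpx : pat x = S := hx
    have h2 : S.card ≤ u := by rw [← hpx]; exact hcard x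
    omega
  -- decomposition
  have hdecomp : ∀ (i : Fin t) (C : Set X), MeasurableSet C →
      (Q i C).toReal = ∑ S : Finset (Fin t), (Q i (C ∩ B S)).toReal := by
    intro i C hC
    have hC' : C = ⋃ S : Finset (Fin t), (C ∩ B S) := by
      ext x
      simp only [Set.mem_iUnion, Set.mem_inter_iff]
      constructor
      · intro hx; exact ⟨pat x, hx, rfl⟩
      · rintro ⟨S, hx, -⟩; exact hx
    have hd : Pairwise (Function.onFun Disjoint fun S => C ∩ B S) := by
      intro S T hST
      refine Set.disjoint_left.mpr ?_
      rintro x ⟨-, hS⟩ ⟨-, hT⟩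
      exact hST ((hS : pat x = S).symm.trans (hT : pat x = T))
    conv_lhs => rw [hC']
    rw [measure_iUnion hd fun S => hC.inter (hBm S), tsum_fintype]
    exact ENNReal.toReal_sum fun S _ => measure_ne_top _ _
  -- intersections
  have hsub1 : ∀ (i : Fin t) (S : Finset (Fin t)), i ∈ S → A i ∩ B S = B S := by
    intro i S hi
    apply Set.inter_eq_self_of_subset_right
    intro x hx
    exact ((hmem S x).mp hx i).mpr hi
  have hsub2 : ∀ (i : Fin t) (S : Finset (Fin t)), i ∉ S → A i ∩ B S = ∅ := by
    intro i S hi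
    ext x
    simp only [Set.mem_inter_iff, Set.mem_empty_iff_false, iff_false, not_and]
    intro hxA hxB
    exact hi (((hmem S x).mp hxB i).mp hxA)
  -- key per-pattern bound
  have keyS : ∀ S : Finset (Fin t),
      ∑ i ∈ S, (Q i (B S)).toReal ≤ c * ∑ i : Fin t, (Q i (B S)).toReal := by
    intro S
    by_cases hSc : S.card ≤ u
    · set f : Fin t → ℝ := fun i => (Q i (B S)).toReal with hf
      have hfnn : ∀ i, 0 ≤ f i := fun i => ENNReal.toReal_nonneg
      have hpair : ∀ i ∈ S, ∀ j ∈ Sᶜ, f i ≤ E * f j := by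
        intro i _ j _
        have h := hldp i j (B S) (hBm S)
        calc f i ≤ (ENNReal.ofReal E * Q j (B S)).toReal := by
              apply ENNReal.toReal_mono _ h
              exact ENNReal.mul_ne_top ENNReal.ofReal_ne_top (measure_ne_top _ _)
          _ = E * f j := by rw [ENNReal.toReal_mul, ENNReal.toReal_ofReal hE0.le]
      have h1 : ∀ j ∈ Sᶜ, ∑ i ∈ S, f i ≤ (u:ℝ) * (E * f j) := by
        intro j hj
        calc ∑ i ∈ S, f i ≤ ∑ _i ∈ S, E * f j :=
              Finset.sum_le_sum fun i hi => hpair i hi j hj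
          _ = (S.card : ℝ) * (E * f j) := by rw [Finset.sum_const, nsmul_eq_mul]
          _ ≤ (u:ℝ) * (E * f j) := by
              apply mul_le_mul_of_nonneg_right _ (by positivity)
              exact_mod_cast hSc
      have h2 : ((Sᶜ).card : ℝ) * ∑ i ∈ S, f i ≤ (u:ℝ) * E * ∑ j ∈ Sᶜ, f j := by
        calc ((Sᶜ).card:ℝ) * ∑ i ∈ S, f i = ∑ _j ∈ Sᶜ, ∑ i ∈ S, f i := by
              rw [Finset.sum_const, nsmul_eq_mul]
          _ ≤ ∑ j ∈ Sᶜ, (u:ℝ) * (E * f j) := Finset.sum_le_sum h1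
          _ = (u:ℝ) * E * ∑ j ∈ Sᶜ, f j := by
              rw [Finset.mul_sum]
              exact Finset.sum_congr rfl fun j _ => by ring
      have hcardc : (t:ℝ) - u ≤ ((Sᶜ).card : ℝ) := by
        have h := Finset.card_compl S
        have : (Sᶜ).card = t - S.card := by simpa using h
        rw [this]
        have hSt : S.card ≤ t := by
          have := Finset.card_le_univ S
          simpa using this
        push_cast [Nat.cast_sub hSt]
        have : (S.card:ℝ) ≤ u := by exact_mod_cast hSc
        linarith
      have hSnn : 0 ≤ ∑ i ∈ S, f i := Finset.sum_nonneg fun i _ => hfnn i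
      have h3 : ((t:ℝ) - u) * ∑ i ∈ S, f i ≤ (u:ℝ) * E * ∑ j ∈ Sᶜ, f j :=
        le_trans (mul_le_mul_of_nonneg_right hcardc hSnn) h2
      have hsplit : ∑ i : Fin t, f i = ∑ i ∈ S, f i + ∑ i ∈ Sᶜ, f i :=
        (Finset.sum_add_sum_compl S f).symm
      rw [hsplit, hcdef, div_mul_eq_mul_div, le_div_iff₀ hD]
      nlinarith [h3]
    · have hB0 : B S = ∅ := hBempty S (lt_of_not_ge hSc)
      simp [hB0, Finset.sum_const_zero]
  -- main inequality
  have main : ∑ i : Fin t, (Q i (A i)).toReal ≤ c * t := by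
    calc ∑ i : Fin t, (Q i (A i)).toReal
        = ∑ i : Fin t, ∑ S : Finset (Fin t), (Q i (A i ∩ B S)).toReal :=
          Finset.sum_congr rfl fun i _ => hdecomp i (A i) (hAm i)
      _ = ∑ S : Finset (Fin t), ∑ i : Fin t, (Q i (A i ∩ B S)).toReal := Finset.sum_comm
      _ = ∑ S : Finset (Fin t), ∑ i ∈ S, (Q i (B S)).toReal := by
          refine Finset.sum_congr rfl fun S _ => ?_
          rw [← Finset.sum_subset (Finset.subset_univ S)
            (fun i _ hi => by rw [hsub2 i S hi]; simp)]
          exact Finset.sum_congr rfl fun i hi => by rw [hsub1 i S hi]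
      _ ≤ ∑ S : Finset (Fin t), c * ∑ i : Fin t, (Q i (B S)).toReal :=
          Finset.sum_le_sum fun S _ => keyS S
      _ = c * ∑ i : Fin t, ∑ S : Finset (Fin t), (Q i (B S)).toReal := by
          rw [← Finset.mul_sum, Finset.sum_comm]
      _ = c * ∑ i : Fin t, (Q i Set.univ).toReal := by
          congr 1
          refine Finset.sum_congr rfl fun i _ => ?_
          rw [hdecomp i Set.univ MeasurableSet.univ]
          simp [Set.univ_inter]
      _ = c * t := by
          have h1 : ∀ i : Fin t, (Q i Set.univ).toReal = 1 := fun i => by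
            have := (hQ i).measure_univ
            simp [this]
          simp [h1]
  -- conclude
  have hne : (Finset.univ : Finset (Fin t)).Nonempty := ⟨⟨0, ht0⟩, Finset.mem_univ _⟩
  obtain ⟨i, -, hi⟩ := Finset.exists_le_of_sum_le hne (by
    calc ∑ i : Fin t, (Q i (A i)).toReal ≤ c * t := main
      _ = ∑ _i : Fin t, c := by rw [Finset.sum_const, nsmul_eq_mul]; simp [mul_comm]
    : ∑ i : Fin t, (Q i (A i)).toReal ≤ ∑ _i : Fin t, c)
  exact ⟨i, hgoal ▸ hi⟩
end

section
/- Let μ be a probability measure on X, α ∈ (0,1), and t,u ∈ ℕ with t > u and α ≤ u/t. Suppose there exist t pairwise disjoint measurable sets B₁,…,B_t with μ(B_i) = α/u for each i (i.e., μ is (α/u, t, 1)-decomposable). Then there exist measurable sets A₁,…,A_t with μ(A_i) = α for all i, such that every x ∈ X lies in at most u of the A_i (i.e., μ is (α, t, u)-decomposable). -/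
open MeasureTheory
open scoped Classical

theorem decomposable_of_disjoint_decomposable {X : Type*} [MeasurableSpace X]
    (μ : Measure X) [IsProbabilityMeasure μ]
    (α : ℝ) (hα : α ∈ Set.Ioo (0 : ℝ) 1)
    (t u : ℕ) (hu : 0 < u) (htu : u < t) (hαu : α ≤ (u : ℝ) / t)
    (B : Fin t → Set X) (hBm : ∀ i, MeasurableSet (B i))
    (hBd : Pairwise (Function.onFun Disjoint B))
    (hBμ : ∀ i, μ (B i) = ENNReal.ofReal (α / u)) :
    ∃ A : Fin t → Set X, (∀ i, MeasurableSet (A i)) ∧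
      (∀ i, μ (A i) = ENNReal.ofReal α) ∧
      ∀ x : X, (Finset.univ.filter fun i => x ∈ A i).card ≤ u := by
  haveI : NeZero t := ⟨(hu.trans htu).ne'⟩
  set emb : Fin u → Fin t := fun j => ⟨j, j.2.trans htu⟩ with hemb
  have hembinj : Function.Injective emb := by
    intro a b h
    simpa [emb, Fin.ext_iff] using h
  refine ⟨fun i => ⋃ j : Fin u, B (i + emb j), fun i => MeasurableSet.iUnion
    (fun j => hBm _), ?_, ?_⟩
  · intro i
    have hd : Pairwise (Function.onFun Disjoint fun j : Fin u => B (i + emb j)) := by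
      intro a b hab
      exact hBd (fun h => hab (hembinj (add_left_cancel h)))
    rw [measure_iUnion hd (fun j => hBm _)]
    simp only [hBμ]
    rw [tsum_fintype]
    rw [Finset.sum_const, Finset.card_univ, Fintype.card_fin, nsmul_eq_mul]
    rw [← ENNReal.ofReal_natCast u, ← ENNReal.ofReal_mul (by positivity)]
    congr 1
    field_simp
  · intro x
    by_cases h : ∃ k, x ∈ B k
    · obtain ⟨k, hk⟩ := h
      have hsub : (Finset.univ.filter fun i => x ∈ ⋃ j : Fin u, B (i + emb j)) ⊆
          Finset.univ.image (fun j : Fin u => k - emb j) := by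
        intro i hi
        simp only [Finset.mem_filter, Set.mem_iUnion] at hi
        obtain ⟨-, j, hj⟩ := hi
        have : i + emb j = k := by
          by_contra hne
          exact (hBd hne).le_bot ⟨hj, hk⟩
        simp only [Finset.mem_image, Finset.mem_univ, true_and]
        exact ⟨j, by rw [← this]; abel⟩
      calc _ ≤ (Finset.univ.image (fun j : Fin u => k - emb j)).card :=
              Finset.card_le_card hsub
        _ ≤ (Finset.univ : Finset (Fin u)).card := Finset.card_image_le
        _ = u := by simp
    · push_neg at h
      have : (Finset.univ.filter fun i => x ∈ ⋃ j : Fin u, B (i + emb j)) = ∅ := by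
        apply Finset.filter_eq_empty_iff.mpr
        intro i _
        simp only [Set.mem_iUnion]
        rintro ⟨j, hj⟩
        exact h _ hj
      rw [this]
      simp [hu.le]
end

section
/- Let μ be a probability measure on X, P a probability measure with density p = dP/dμ satisfying c₁ ≤ p ≤ c₂ μ-a.e., where 0 < c₁ < 1 < c₂, c₂ > c₁e^ε. With b, r₁, r₂ defined as b = (c₂−c₁)/((e^ε−1)(1−c₁)+c₂−c₁), r₁ = c₁/b, r₂ = c₂/(be^ε), one has ∫ clip(p(x)/r₁; b, be^ε) dμ(x) ≥ 1 and ∫ clip(p(x)/r₂; b, be^ε) dμ(x) ≤ 1. -/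
/-!
Let `L` be the chord through `(c₁, b)` and `(c₂, b e^ε)`. On `[c₁, c₂]`, the function
`t ↦ clip(t / r₁; b, b e^ε)` equals the concave `min (b e^ε) (t / r₁)`, and
`t ↦ clip(t / r₂; b, b e^ε)` is dominated by the convex `max b (t / r₂)`; comparing the endpoint
values puts the first above `L` and the second below it. Since `L` is affine,
`∫ L(p) dμ = L(∫ p dμ) = L(1)`, and `b` is precisely the value for which `L(1) = 1`.
-/

open MeasureTheory Set

lemma ConvexOn.le_of_concaveOn_of_le_endpoints {a b : ℝ} {f g : ℝ → ℝ}
    (hf : ConvexOn ℝ (Icc a b) f) (hg : ConcaveOn ℝ (Icc a b) g)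
    (ha : f a ≤ g a) (hb : f b ≤ g b) {t : ℝ} (ht : t ∈ Icc a b) : f t ≤ g t := by
  have hab : a ≤ b := ht.1.trans ht.2
  have hmin := (hg.sub hf).min_le_of_mem_Icc (left_mem_Icc.2 hab) (right_mem_Icc.2 hab) ht
  exact sub_nonneg.1 ((le_min (sub_nonneg.2 ha) (sub_nonneg.2 hb)).trans hmin)

noncomputable def chord (c₁ c₂ y₁ y₂ t : ℝ) : ℝ := y₁ + (y₂ - y₁) / (c₂ - c₁) * (t - c₁)

section Chord

variable {c₁ c₂ y₁ y₂ : ℝ}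

lemma chord_left : chord c₁ c₂ y₁ y₂ c₁ = y₁ := by simp [chord]

lemma chord_right (h : c₁ ≠ c₂) : chord c₁ c₂ y₁ y₂ c₂ = y₂ := by
  rw [chord, div_mul_cancel₀ _ (sub_ne_zero.2 h.symm)]
  ring

lemma chord_eq_mul_add :
    chord c₁ c₂ y₁ y₂ = fun t => (y₂ - y₁) / (c₂ - c₁) * t + (y₁ - (y₂ - y₁) / (c₂ - c₁) * c₁) := by
  ext t
  rw [chord]
  ring

lemma convexOn_chord {s : Set ℝ} (hs : Convex ℝ s) : ConvexOn ℝ s (chord c₁ c₂ y₁ y₂) :=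
  chord_eq_mul_add ▸ ((LinearMap.mulLeft ℝ _).convexOn hs).add_const _

lemma concaveOn_chord {s : Set ℝ} (hs : Convex ℝ s) : ConcaveOn ℝ s (chord c₁ c₂ y₁ y₂) :=
  chord_eq_mul_add ▸ ((LinearMap.mulLeft ℝ _).concaveOn hs).add_const _

variable {X : Type*} [MeasurableSpace X] {μ : Measure X} {p : X → ℝ}

lemma integrable_chord_comp [IsFiniteMeasure μ] (hp : Integrable p μ) :
    Integrable (fun x => chord c₁ c₂ y₁ y₂ (p x)) μ :=
  (integrable_const _).add ((hp.sub (integrable_const _)).const_mul _)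

lemma integral_chord_comp [IsProbabilityMeasure μ] (hp : Integrable p μ) :
    ∫ x, chord c₁ c₂ y₁ y₂ (p x) ∂μ = chord c₁ c₂ y₁ y₂ (∫ x, p x ∂μ) := by
  simp only [chord]
  rw [integral_add (integrable_const _) (by fun_prop), integral_const_mul, integral_sub hp (integrable_const _)]
  simp

end Chord

section Clip

variable {c₁ c₂ lo hi r t : ℝ}

lemma chord_le_clip_div (hc : c₁ < c₂) (hlohi : lo ≤ hi) (hlo : lo ≤ c₁ / r) (hhi : hi ≤ c₂ / r)
    (ht : t ∈ Icc c₁ c₂) : chord c₁ c₂ lo hi t ≤ max lo (min hi (t / r)) := by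
  have hdiv : ConcaveOn ℝ (Icc c₁ c₂) fun t => t / r :=
    (LinearMap.mulRight ℝ r⁻¹).concaveOn (convex_Icc c₁ c₂)
  refine le_trans ?_ (le_max_right _ _)
  refine (convexOn_chord (convex_Icc _ _)).le_of_concaveOn_of_le_endpoints
    ((concaveOn_const hi (convex_Icc _ _)).inf hdiv) ?_ ?_ ht
  · rw [chord_left]
    exact le_min hlohi hlo
  · rw [chord_right hc.ne]
    exact le_min le_rfl hhi

lemma clip_div_le_chord (hc : c₁ < c₂) (hlohi : lo ≤ hi) (hlo : c₁ / r ≤ lo) (hhi : c₂ / r ≤ hi)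
    (ht : t ∈ Icc c₁ c₂) : max lo (min hi (t / r)) ≤ chord c₁ c₂ lo hi t := by
  have hdiv : ConvexOn ℝ (Icc c₁ c₂) fun t => t / r :=
    (LinearMap.mulRight ℝ r⁻¹).convexOn (convex_Icc c₁ c₂)
  refine le_trans (max_le_max le_rfl (min_le_right _ _)) ?_
  refine ((convexOn_const lo (convex_Icc _ _)).sup hdiv).le_of_concaveOn_of_le_endpoints
    (concaveOn_chord (convex_Icc _ _)) ?_ ?_ ht
  · rw [chord_left]
    exact max_le le_rfl hlo
  · rw [chord_right hc.ne]
    exact max_le hlohi hhi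

end Clip

lemma chord_one_eq_one {c₁ c₂ E b : ℝ} (hc : c₁ < c₂) (hD : (E - 1) * (1 - c₁) + c₂ - c₁ ≠ 0)
    (hb : b = (c₂ - c₁) / ((E - 1) * (1 - c₁) + c₂ - c₁)) : chord c₁ c₂ b (b * E) 1 = 1 := by
  have := sub_ne_zero.2 hc.ne'
  rw [chord, hb]
  field_simp
  ring

theorem clip_normalization_range_general {X : Type*} [MeasurableSpace X]
    (μ : Measure X) [IsProbabilityMeasure μ]
    (ε c₁ c₂ : ℝ) (hε : 0 < ε) (hc₁ : 0 < c₁) (h1 : c₁ < 1)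
    (hc : c₁ * Real.exp ε < c₂)
    (p : X → ℝ) (hpint : Integrable p μ)
    (hpi : ∫ x, p x ∂μ = 1)
    (hbd : ∀ᵐ x ∂μ, c₁ ≤ p x ∧ p x ≤ c₂)
    (b r₁ r₂ : ℝ)
    (hb : b = (c₂ - c₁) / ((Real.exp ε - 1) * (1 - c₁) + c₂ - c₁))
    (hr₁ : r₁ = c₁ / b) (hr₂ : r₂ = c₂ / (b * Real.exp ε)) :
    1 ≤ ∫ x, max b (min (b * Real.exp ε) (p x / r₁)) ∂μ ∧
    ∫ x, max b (min (b * Real.exp ε) (p x / r₂)) ∂μ ≤ 1 := by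
  set E := Real.exp ε
  have hE : 1 ≤ E := Real.one_le_exp hε.le
  have hc₁₂ : c₁ < c₂ := (le_mul_of_one_le_right hc₁.le hE).trans_lt hc
  have hD : 0 < (E - 1) * (1 - c₁) + c₂ - c₁ := by
    nlinarith [mul_nonneg (sub_nonneg.2 hE) (sub_pos.2 h1).le]
  have hb₀ : 0 < b := hb ▸ div_pos (sub_pos.2 hc₁₂) hD
  have hbE : b ≤ b * E := le_mul_of_one_le_right hb₀.le hE
  have hmean : ∫ x, chord c₁ c₂ b (b * E) (p x) ∂μ = 1 := by
    rw [integral_chord_comp hpint, hpi, chord_one_eq_one hc₁₂ hD.ne' hb]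
  have hclip (r : ℝ) : Integrable (fun x => max b (min (b * E) (p x / r))) μ :=
    (integrable_const b).sup ((integrable_const _).inf (hpint.div_const r))
  constructor
  · refine hmean.symm.le.trans (integral_mono_ae (integrable_chord_comp hpint) (hclip r₁) ?_)
    filter_upwards [hbd] with x hx
    refine chord_le_clip_div hc₁₂ hbE (by rw [hr₁, div_div_cancel₀ hc₁.ne']) ?_ hx
    rw [hr₁, div_div_eq_mul_div, le_div_iff₀ hc₁]
    nlinarith
  · refine (integral_mono_ae (hclip r₂) (integrable_chord_comp hpint) ?_).trans hmean.le
    filter_upwards [hbd] with x hx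
    refine clip_div_le_chord hc₁₂ hbE ?_ (by rw [hr₂, div_div_cancel₀ (by linarith)]) hx
    rw [hr₂, div_div_eq_mul_div, div_le_iff₀ (by linarith)]
    nlinarith

theorem clip_normalization_range {X : Type*} [MeasurableSpace X]
    (μ : Measure X) [IsProbabilityMeasure μ]
    (ε c₁ c₂ : ℝ) (hε : 0 < ε) (hc₁ : 0 < c₁) (h1 : c₁ < 1) (h2 : 1 < c₂)
    (hc : c₁ * Real.exp ε < c₂)
    (p : X → ℝ) (hp : Measurable p) (hpint : Integrable p μ)
    (hpi : ∫ x, p x ∂μ = 1)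
    (hbd : ∀ᵐ x ∂μ, c₁ ≤ p x ∧ p x ≤ c₂)
    (b r₁ r₂ : ℝ)
    (hb : b = (c₂ - c₁) / ((Real.exp ε - 1) * (1 - c₁) + c₂ - c₁))
    (hr₁ : r₁ = c₁ / b) (hr₂ : r₂ = c₂ / (b * Real.exp ε)) :
    1 ≤ ∫ x, max b (min (b * Real.exp ε) (p x / r₁)) ∂μ ∧
    ∫ x, max b (min (b * Real.exp ε) (p x / r₂)) ∂μ ≤ 1 :=
  clip_normalization_range_general μ ε c₁ c₂ hε hc₁ h1 hc p hpint hpi hbd b r₁ r₂ hb hr₁ hr₂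
end

section
/- Let ε > 0 and μ a probability measure on X. Let P, P' be probability measures absolutely continuous w.r.t. μ with densities p, p'. For constants b > 0 and r_P ≥ r_{P'} > 0, let q(x) = clip(p(x)/r_P; b, be^ε) and q'(x) = clip(p'(x)/r_{P'}; b, be^ε), and suppose ∫q dμ = ∫q' dμ = 1 so that they define probability measures Q, Q'. Then TV(Q, Q') ≤ (2/r_P)·TV(P, P'), where TV denotes the total variation distance. -/
open MeasureTheory

lemma clip_lipschitz (b M a c : ℝ) :
    |max b (min M a) - max b (min M c)| ≤ |a - c| := by
  calc |max b (min M a) - max b (min M c)|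
      ≤ max |b - b| |min M a - min M c| := abs_max_sub_max_le_max _ _ _ _
    _ = |min M a - min M c| := by simp
    _ ≤ max |M - M| |a - c| := abs_min_sub_min_le_max _ _ _ _
    _ = |a - c| := by simp

theorem tv_lipschitz_of_clip_mechanism {X : Type*} [MeasurableSpace X]
    (μ : Measure X) [IsProbabilityMeasure μ]
    (ε : ℝ) (hε : 0 < ε) (b : ℝ) (hb : 0 < b)
    (p p' : X → ℝ) (hp : Measurable p) (hp' : Measurable p')
    (hp0 : ∀ x, 0 ≤ p x) (hp'0 : ∀ x, 0 ≤ p' x)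
    (hpint : Integrable p μ) (hp'int : Integrable p' μ)
    (hpi : ∫ x, p x ∂μ = 1) (hp'i : ∫ x, p' x ∂μ = 1)
    (rP rP' : ℝ) (hr' : 0 < rP') (hrr : rP' ≤ rP)
    (q q' : X → ℝ)
    (hq : q = fun x => max b (min (b * Real.exp ε) (p x / rP)))
    (hq' : q' = fun x => max b (min (b * Real.exp ε) (p' x / rP')))
    (hqi : ∫ x, q x ∂μ = 1) (hq'i : ∫ x, q' x ∂μ = 1) :
    (1 / 2) * ∫ x, |q x - q' x| ∂μ ≤
      (2 / rP) * ((1 / 2) * ∫ x, |p x - p' x| ∂μ) := by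
  have hrP : 0 < rP := lt_of_lt_of_le hr' hrr
  set M := b * Real.exp ε with hM
  -- key pointwise bound
  have key : ∀ x, max 0 (q x - q' x) ≤ |p x - p' x| / rP := by
    intro x
    have hcc' : p' x / rP ≤ p' x / rP' :=
      div_le_div_of_nonneg_left (hp'0 x) hr' hrr
    have hq'ge : max b (min M (p' x / rP)) ≤ q' x := by
      rw [hq']
      exact max_le_max le_rfl (min_le_min le_rfl hcc')
    have h1 : q x - q' x ≤ q x - max b (min M (p' x / rP)) := by linarith
    have h2 : |q x - max b (min M (p' x / rP))| ≤ |p x / rP - p' x / rP| := by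
      rw [hq]; exact clip_lipschitz b M _ _
    have h3 : |p x / rP - p' x / rP| = |p x - p' x| / rP := by
      rw [div_sub_div_same, abs_div, abs_of_pos hrP]
    have h4 : q x - q' x ≤ |p x - p' x| / rP := by
      calc q x - q' x ≤ q x - max b (min M (p' x / rP)) := h1
        _ ≤ |q x - max b (min M (p' x / rP))| := le_abs_self _
        _ ≤ |p x / rP - p' x / rP| := h2
        _ = |p x - p' x| / rP := h3
    have h5 : (0:ℝ) ≤ |p x - p' x| / rP := div_nonneg (abs_nonneg _) hrP.le
    exact max_le h5 h4
  -- measurability and integrability of q, q'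
  have hqm : Measurable q := by
    rw [hq]; exact measurable_const.max (measurable_const.min (hp.div_const rP))
  have hq'm : Measurable q' := by
    rw [hq']; exact measurable_const.max (measurable_const.min (hp'.div_const rP'))
  have hMpos : 0 < M := by positivity
  have hqbd : ∀ x, ‖q x‖ ≤ max b M := by
    intro x
    rw [hq, Real.norm_eq_abs, abs_of_nonneg (le_max_of_le_left hb.le)]
    exact max_le_max le_rfl (min_le_left _ _)
  have hq'bd : ∀ x, ‖q' x‖ ≤ max b M := by
    intro x
    rw [hq', Real.norm_eq_abs, abs_of_nonneg (le_max_of_le_left hb.le)]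
    exact max_le_max le_rfl (min_le_left _ _)
  have hqint : Integrable q μ :=
    (integrable_const (max b M)).mono' hqm.aestronglyMeasurable
      (Filter.Eventually.of_forall hqbd)
  have hq'int : Integrable q' μ :=
    (integrable_const (max b M)).mono' hq'm.aestronglyMeasurable
      (Filter.Eventually.of_forall hq'bd)
  have hsubint : Integrable (fun x => q x - q' x) μ := hqint.sub hq'int
  have hposint : Integrable (fun x => max 0 (q x - q' x)) μ := by
    simpa [max_comm] using hsubint.pos_part
  have hnegint : Integrable (fun x => max 0 (q' x - q x)) μ := by
    simpa [max_comm] using (hq'int.sub hqint).pos_part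
  have hppint : Integrable (fun x => |p x - p' x|) μ := (hpint.sub hp'int).abs
  have hppint' : Integrable (fun x => |p x - p' x| / rP) μ := hppint.div_const _
  -- ∫ (q - q') = 0
  have hzero : ∫ x, (q x - q' x) ∂μ = 0 := by
    rw [integral_sub hqint hq'int, hqi, hq'i]; ring
  -- |t| = max 0 t + max 0 (-t), t = max 0 t - max 0 (-t)
  have habs : ∀ x, |q x - q' x| = max 0 (q x - q' x) + max 0 (q' x - q x) := by
    intro x
    rcases le_total (q' x) (q x) with h | h
    · rw [abs_of_nonneg (by linarith), max_eq_right (by linarith),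
        max_eq_left (by linarith)]; ring
    · rw [abs_of_nonpos (by linarith), max_eq_left (by linarith),
        max_eq_right (by linarith)]; ring
  have hdiff : ∀ x, q x - q' x = max 0 (q x - q' x) - max 0 (q' x - q x) := by
    intro x
    rcases le_total (q' x) (q x) with h | h
    · rw [max_eq_right (by linarith), max_eq_left (by linarith)]; ring
    · rw [max_eq_left (by linarith), max_eq_right (by linarith)]; ring
  have hint_abs : ∫ x, |q x - q' x| ∂μ
      = (∫ x, max 0 (q x - q' x) ∂μ) + ∫ x, max 0 (q' x - q x) ∂μ := by
    rw [← integral_add hposint hnegint]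
    exact integral_congr_ae (Filter.Eventually.of_forall habs)
  have hint_diff : (0:ℝ)
      = (∫ x, max 0 (q x - q' x) ∂μ) - ∫ x, max 0 (q' x - q x) ∂μ := by
    have h := integral_congr_ae (μ := μ) (Filter.Eventually.of_forall hdiff)
    rw [integral_sub hposint hnegint] at h
    linarith [hzero, h]
  have hmain : ∫ x, max 0 (q x - q' x) ∂μ ≤ ∫ x, |p x - p' x| / rP ∂μ :=
    integral_mono hposint hppint' key
  have hIdiv : ∫ x, |p x - p' x| / rP ∂μ = (∫ x, |p x - p' x| ∂μ) / rP :=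
    integral_div _ _
  have : (1 / 2) * ∫ x, |q x - q' x| ∂μ = ∫ x, max 0 (q x - q' x) ∂μ := by
    rw [hint_abs]; linarith [hint_diff]
  rw [this]
  calc ∫ x, max 0 (q x - q' x) ∂μ ≤ (∫ x, |p x - p' x| ∂μ) / rP := by
        rw [← hIdiv]; exact hmain
    _ = (2 / rP) * ((1 / 2) * ∫ x, |p x - p' x| ∂μ) := by ring
end

section
/- Let 0 ≤ c₁ < 1 < c₂ with c₂ > c₁e^ε for ε > 0, and let S, T ≥ 0 satisfy c₂S + T ≤ c₂ and c₁S + T ≤ 1. Then c₂e^{−ε}S + T ≤ (c₂/e^ε)·((e^ε−1)(1−c₁)+c₂−c₁)/(c₂−c₁). -/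
theorem convex_comb_upper_bound (ε c₁ c₂ S T : ℝ) (hε : 0 < ε)
    (hc₁ : 0 ≤ c₁) (h1 : c₁ < 1) (h2 : 1 < c₂) (hc : c₁ * Real.exp ε < c₂)
    (hS : 0 ≤ S) (hT : 0 ≤ T)
    (h₁ : c₂ * S + T ≤ c₂) (h₂ : c₁ * S + T ≤ 1) :
    c₂ * Real.exp (-ε) * S + T ≤
      c₂ / Real.exp ε * (((Real.exp ε - 1) * (1 - c₁) + c₂ - c₁) / (c₂ - c₁)) := by
  have hE : 1 < Real.exp ε := by
    calc (1:ℝ) = Real.exp 0 := Real.exp_zero.symm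
    _ < Real.exp ε := Real.exp_lt_exp.mpr hε
  have hEpos : 0 < Real.exp ε := by positivity
  rw [Real.exp_neg]
  set E := Real.exp ε with hEdef
  have hd : 0 < c₂ - c₁ := by linarith
  have key1 : (c₂ - c₁ * E) * (c₂ * S + T) ≤ (c₂ - c₁ * E) * c₂ :=
    mul_le_mul_of_nonneg_left h₁ (by linarith)
  have key2 : (c₂ * E - c₂) * (c₁ * S + T) ≤ (c₂ * E - c₂) * 1 :=
    mul_le_mul_of_nonneg_left h₂ (by nlinarith)
  have main : c₂ * S * (c₂ - c₁) + T * E * (c₂ - c₁)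
      ≤ c₂ * ((E - 1) * (1 - c₁) + c₂ - c₁) := by nlinarith [key1, key2]
  have hne : E ≠ 0 := ne_of_gt hEpos
  have hdne : c₂ - c₁ ≠ 0 := ne_of_gt hd
  calc c₂ * E⁻¹ * S + T
      = (c₂ * S * (c₂ - c₁) + T * E * (c₂ - c₁)) / ((c₂ - c₁) * E) := by
        field_simp
    _ ≤ c₂ * ((E - 1) * (1 - c₁) + c₂ - c₁) / ((c₂ - c₁) * E) := by
        gcongr
    _ = c₂ / E * (((E - 1) * (1 - c₁) + c₂ - c₁) / (c₂ - c₁)) := by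
        rw [div_mul_div_comm, mul_comm (c₂ - c₁) E]
end
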